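/- Let T be a tree with Δ(T) ≥ (α(T)+2)/2, let u be a vertex of maximum degree, and suppose w ≠ u also has degree Δ(T). Then w is adjacent to u. -/

import Mathlib

open SimpleGraph

/-- An edge coloring `c` makes `G` conflict-free connected: every two distinct
vertices are joined by a path containing a color used on exactly one of its edges. -/
def IsCFConnColoring {V : Type*} (G : SimpleGraph V) (c : Sym2 V → ℕ) : Prop :=
  ∀ u v : V, u ≠ v → ∃ p : G.Walk u v, p.IsPath ∧
    ∃ col : ℕ, (p.edges.filter (fun e => c e = col)).length = 1

/-- The conflict-free connection number: the minimum number of colors in a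
conflict-free connection coloring. -/
noncomputable def cfcNum {V : Type*} (G : SimpleGraph V) : ℕ :=
  sInf {k | ∃ c : Sym2 V → ℕ, (∀ e, c e < k) ∧ IsCFConnColoring G c}

/-- The independence number: the maximum size of a set of pairwise non-adjacent vertices. -/
noncomputable def indepNum {V : Type*} [Fintype V] (G : SimpleGraph V) : ℕ :=
  sSup {n | ∃ s : Finset V, (↑s : Set V).Pairwise (fun a b => ¬ G.Adj a b) ∧ s.card = n}

noncomputable local instance {V : Type*} (G : SimpleGraph V) : DecidableRel G.Adj :=
  fun _ _ => Classical.dec _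

/-! If `u ≠ w` are non-adjacent vertices of a tree, let `a` be the neighbour of `u` on the
`u`–`w` path. By uniqueness of paths, no vertex of `N(u) \ {a}` lies in or next to `N(w)`, and
two neighbours of one vertex are never adjacent, so `(N(u) \ {a}) ∪ N(w)` is an independent set
of size `deg u + deg w - 1`. For `deg u = deg w = Δ` this contradicts `α + 2 ≤ 2Δ`. -/

lemma indepNum_eq_simpleGraph_indepNum {V : Type*} [Fintype V] (G : SimpleGraph V) :
    _root_.indepNum G = G.indepNum := by
  simp only [_root_.indepNum, SimpleGraph.indepNum, isNIndepSet_iff, isIndepSet_iff]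

namespace SimpleGraph

open Finset

variable {V : Type*} {G : SimpleGraph V} {u w x y : V}

lemma IsAcyclic.not_adj_of_adj_of_adj (hG : G.IsAcyclic) (hx : G.Adj u x) (hy : G.Adj u y) :
    ¬G.Adj x y := by
  classical
  exact fun hxy => hG.cliqueFree le_rfl {u, x, y} (is3Clique_triple_iff.mpr ⟨hx, hy, hxy⟩)

lemma IsAcyclic.eq_snd_of_isPath (hG : G.IsAcyclic) {p q : G.Walk u w} (hp : p.IsPath)
    (hq : q.IsPath) : q.snd = p.snd :=
  congrArg (fun r : G.Path u w => r.1.snd) ((hG.subsingleton_path u w).elim ⟨q, hq⟩ ⟨p, hp⟩)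

lemma IsAcyclic.eq_snd_of_adj_of_adj (hG : G.IsAcyclic) {p : G.Walk u w} (hp : p.IsPath)
    (huw : u ≠ w) (hux : G.Adj u x) (hxw : G.Adj x w) : x = p.snd :=
  hG.eq_snd_of_isPath hp (q := .cons hux (.cons hxw .nil)) <| by
    simp [Walk.isPath_def, hux.ne, huw, hxw.ne]

lemma IsAcyclic.eq_snd_of_adj_of_adj_of_adj (hG : G.IsAcyclic) {p : G.Walk u w}
    (hp : p.IsPath) (huw : u ≠ w) (hnadj : ¬G.Adj u w) (hux : G.Adj u x) (hxy : G.Adj x y)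
    (hyw : G.Adj y w) : x = p.snd := by
  have huy : u ≠ y := by rintro rfl; exact hnadj hyw
  have hxw : x ≠ w := by rintro rfl; exact hnadj hux
  exact hG.eq_snd_of_isPath hp (q := .cons hux (.cons hxy (.cons hyw .nil))) <| by
    simp [Walk.isPath_def, hux.ne, huy, huw, hxy.ne, hxw, hyw.ne]

variable [LocallyFinite G]

lemma IsAcyclic.disjoint_neighborFinset_erase_snd [DecidableEq V] (hG : G.IsAcyclic)
    {p : G.Walk u w} (hp : p.IsPath) (huw : u ≠ w) :
    Disjoint ((G.neighborFinset u).erase p.snd) (G.neighborFinset w) := by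
  refine Finset.disjoint_left.mpr fun x hxu hxw => ?_
  rw [mem_erase, mem_neighborFinset] at hxu
  exact hxu.1 (hG.eq_snd_of_adj_of_adj hp huw hxu.2 ((mem_neighborFinset _ _ _).mp hxw).symm)

lemma IsAcyclic.isIndepSet_neighborFinset_erase_snd_union [DecidableEq V]
    (hG : G.IsAcyclic) {p : G.Walk u w} (hp : p.IsPath) (huw : u ≠ w) (hnadj : ¬G.Adj u w) :
    G.IsIndepSet ↑((G.neighborFinset u).erase p.snd ∪ G.neighborFinset w) := by
  rintro x hx y hy - hxy
  simp only [coe_union, Set.mem_union, mem_coe, mem_erase,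
    mem_neighborFinset] at hx hy
  rcases hx with ⟨hxp, hux⟩ | hwx <;> rcases hy with ⟨hyp, huy⟩ | hwy
  · exact hG.not_adj_of_adj_of_adj hux huy hxy
  · exact hxp (hG.eq_snd_of_adj_of_adj_of_adj hp huw hnadj hux hxy hwy.symm)
  · exact hyp (hG.eq_snd_of_adj_of_adj_of_adj hp huw hnadj huy hxy.symm hwx.symm)
  · exact hG.not_adj_of_adj_of_adj hwx hwy hxy

lemma IsAcyclic.degree_add_degree_le_indepNum_add_one [Finite V] (hG : G.IsAcyclic)
    (hreach : G.Reachable u w) (huw : u ≠ w) (hnadj : ¬G.Adj u w) :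
    G.degree u + G.degree w ≤ G.indepNum + 1 := by
  classical
  obtain ⟨p, hp⟩ := hreach.exists_isPath
  have hsnd : p.snd ∈ G.neighborFinset u :=
    (mem_neighborFinset _ _ _).mpr (p.adj_snd (Walk.not_nil_of_ne huw))
  calc G.degree u + G.degree w
      = #((G.neighborFinset u).erase p.snd ∪ G.neighborFinset w) + 1 := by
        rw [card_union_of_disjoint (hG.disjoint_neighborFinset_erase_snd hp huw),
          ← card_neighborFinset_eq_degree, ← card_neighborFinset_eq_degree,
          ← card_erase_add_one hsnd]
        ring
    _ ≤ G.indepNum + 1 := by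
        gcongr
        exact (hG.isIndepSet_neighborFinset_erase_snd_union hp huw hnadj).card_le_indepNum

end SimpleGraph

theorem stmt12 {V : Type*} [Fintype V] (T : SimpleGraph V) (hT : T.IsTree)
    (h : _root_.indepNum T + 2 ≤ 2 * T.maxDegree) (u w : V)
    (hu : T.degree u = T.maxDegree) (hw : T.degree w = T.maxDegree) (hne : w ≠ u) :
    T.Adj u w := by
  by_contra hnadj
  have := hT.isAcyclic.degree_add_degree_le_indepNum_add_one (hT.connected u w) hne.symm hnadj
  rw [indepNum_eq_simpleGraph_indepNum] at h
  omega
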